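/- arXiv:2104.09911 — 3 statements merged into one kernel-verified Lean document; each statement's English description precedes it below -/
import Mathlib

section
/- The map y ↦ ((1+y²)/y)·arctan(y) is strictly increasing on (0, ∞). -/
/-! The derivative of `y ↦ (1 + y²)/y · arctan y` is `((y² - 1) arctan y + y) / y²`. Its numerator
is clearly positive for `y ≥ 1`, and for `0 < y < 1` the bound `arctan y < y` gives
`(y² - 1) arctan y + y > (y² - 1) y + y = y³ > 0`. -/

open Real Set

lemma Real.arctan_lt_self {x : ℝ} (hx : 0 < x) : arctan x < x := by
  simpa only [tan_arctan] using lt_tan (arctan_pos.2 hx) (arctan_lt_pi_div_two x)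

lemma hasDerivAt_one_add_sq_div_mul_arctan {y : ℝ} (hy : y ≠ 0) :
    HasDerivAt (fun y : ℝ => ((1 + y ^ 2) / y) * arctan y)
      (((y ^ 2 - 1) * arctan y + y) / y ^ 2) y := by
  have hquot : HasDerivAt (fun y : ℝ => (1 + y ^ 2) / y)
      ((2 * y * y - (1 + y ^ 2) * 1) / y ^ 2) y := by
    refine HasDerivAt.div ?_ (hasDerivAt_id y) hy
    simpa using (hasDerivAt_pow 2 y).const_add 1
  refine (hquot.mul (hasDerivAt_arctan y)).congr_deriv ?_
  field_simp
  ring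

lemma sq_sub_one_mul_arctan_add_self_pos {y : ℝ} (hy : 0 < y) :
    0 < (y ^ 2 - 1) * arctan y + y := by
  have hpos : 0 < arctan y := arctan_pos.2 hy
  have hlt : arctan y < y := arctan_lt_self hy
  nlinarith [mul_pos (mul_pos hy hy) hpos]

theorem stmt_2 :
    StrictMonoOn (fun y : ℝ => ((1 + y ^ 2) / y) * arctan y) (Ioi 0) := by
  have hderiv : ∀ y ∈ Ioi (0 : ℝ), HasDerivAt (fun y : ℝ => ((1 + y ^ 2) / y) * arctan y)
      (((y ^ 2 - 1) * arctan y + y) / y ^ 2) y :=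
    fun y hy => hasDerivAt_one_add_sq_div_mul_arctan (ne_of_gt hy)
  refine strictMonoOn_of_deriv_pos (convex_Ioi 0)
    (fun y hy => (hderiv y hy).continuousAt.continuousWithinAt) (fun y hy => ?_)
  rw [interior_Ioi] at hy
  rw [(hderiv y hy).deriv]
  exact div_pos (sq_sub_one_mul_arctan_add_self_pos hy) (pow_pos hy 2)
end

section
/- If 0 < φ(x) ≤ π for all x > 0 and φ is not identically 0, then ∫₀^∞ [cos(φ(x))·φ(x) - sin(φ(x))]·φ(x) dx < 0, provided φ is continuous, integrable against itself, and strictly positive on a set of positive measure. -/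
/-! The integrand is `-(sin t - t cos t) t` at `t = φ x`. The function `t ↦ sin t - t cos t`
vanishes at `0` and has derivative `t sin t > 0` on `(0, π)`, so it is positive on `(0, π]`;
hence the integrand is strictly negative on all of `(0, ∞)`, a set of positive measure. -/

open Real Set MeasureTheory

theorem Real.hasDerivAt_sin_sub_mul_cos (x : ℝ) :
    HasDerivAt (fun t => sin t - t * cos t) (x * sin x) x :=
  ((hasDerivAt_sin x).sub ((hasDerivAt_id' x).mul (hasDerivAt_cos x))).congr_deriv (by ring)

theorem Real.strictMonoOn_sin_sub_mul_cos :
    StrictMonoOn (fun t => sin t - t * cos t) (Icc 0 π) := by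
  refine strictMonoOn_of_deriv_pos (convex_Icc 0 π) (by fun_prop) fun x hx => ?_
  rw [interior_Icc] at hx
  rw [(hasDerivAt_sin_sub_mul_cos x).deriv]
  exact mul_pos hx.1 (sin_pos_of_pos_of_lt_pi hx.1 hx.2)

theorem Real.mul_cos_lt_sin {t : ℝ} (ht : 0 < t) (ht' : t ≤ π) : t * cos t < sin t := by
  have := strictMonoOn_sin_sub_mul_cos (left_mem_Icc.2 pi_pos.le) ⟨ht.le, ht'⟩ ht
  simp only [sin_zero, zero_mul, sub_zero] at this
  linarith

theorem Real.mul_cos_sub_sin_mul_neg {t : ℝ} (ht : 0 < t) (ht' : t ≤ π) :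
    (cos t * t - sin t) * t < 0 :=
  mul_neg_of_neg_of_pos (by linarith [mul_cos_lt_sin ht ht']) ht

theorem MeasureTheory.setIntegral_neg_of_neg {X : Type*} [MeasurableSpace X] {μ : Measure X}
    {s : Set X} {f : X → ℝ} (hs : MeasurableSet s) (hμs : μ s ≠ 0) (hfi : IntegrableOn f s μ)
    (hf : ∀ x ∈ s, f x < 0) : ∫ x in s, f x ∂μ < 0 := by
  have hsupp : Function.support (fun x => -f x) ∩ s = s :=
    inter_eq_right.2 fun x hx => neg_ne_zero.2 (hf x hx).ne
  have hpos : 0 < ∫ x in s, -f x ∂μ := by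
    rw [setIntegral_pos_iff_support_of_nonneg_ae (f := fun x => -f x) _ hfi.neg, hsupp]
    · exact pos_iff_ne_zero.2 hμs
    · filter_upwards [ae_restrict_mem hs] with x hx using neg_nonneg.2 (hf x hx).le
  rw [integral_neg] at hpos
  linarith

theorem stmt_6_general (φ : ℝ → ℝ)
    (hpos : ∀ x ∈ Ioi (0 : ℝ), 0 < φ x) (hle : ∀ x ∈ Ioi (0 : ℝ), φ x ≤ π)
    (hint : IntegrableOn (fun x => (Real.cos (φ x) * φ x - Real.sin (φ x)) * φ x) (Ioi 0)) :
    ∫ x in Ioi (0 : ℝ), (Real.cos (φ x) * φ x - Real.sin (φ x)) * φ x < 0 :=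
  setIntegral_neg_of_neg measurableSet_Ioi (by simp [volume_Ioi]) hint
    fun x hx => mul_cos_sub_sin_mul_neg (hpos x hx) (hle x hx)

theorem stmt_6 (φ : ℝ → ℝ) (hcont : ContinuousOn φ (Ioi 0))
    (hpos : ∀ x ∈ Ioi (0 : ℝ), 0 < φ x) (hle : ∀ x ∈ Ioi (0 : ℝ), φ x ≤ π)
    (hint : IntegrableOn (fun x => (Real.cos (φ x) * φ x - Real.sin (φ x)) * φ x) (Ioi 0)) :
    ∫ x in Ioi (0 : ℝ), (Real.cos (φ x) * φ x - Real.sin (φ x)) * φ x < 0 :=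
  stmt_6_general φ hpos hle hint
end

section
/- The function F(y) = ((1+y²)/y)·[θ·arctan(y) − μπ/2], where θ = c₁+c₂+c₃ and μ = c₂+c₃ with c₁,c₂,c₃ > 0, is strictly increasing on (0, ∞), tends to −∞ as y → 0⁺, and tends to +∞ as y → +∞; hence for every λ ∈ ℝ there is a unique y > 0 with F(y) = λ. -/
/-!
Writing `F y = (1 + y²)/y · A y` with `A y = θ arctan y - μπ/2`, one finds
`y² F' y = (y² - 1) A y + θ y`. This is positive: for `y ≤ 1` because `A y < θ y`, and for
`y > 1` because `A y > -θ (π/2 - arctan y) = -θ arctan (1/y) > -θ/y`; both bounds come from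
`arctan x < x` for `x > 0`. As `y → 0⁺` the factor `A` tends to `-μπ/2 < 0` and as `y → ∞` to
`(θ - μ)π/2 > 0`, while `(1 + y²)/y → ∞` at both ends. A continuous strictly increasing function
with these limits is a bijection from `(0, ∞)` onto `ℝ`.
-/

open Real Set Filter Topology

theorem StrictMonoOn.existsUnique_mem_Ioi_eq {X δ : Type*} [ConditionallyCompleteLinearOrder X]
    [TopologicalSpace X] [OrderTopology X] [DenselyOrdered X] [NoMaxOrder X] [LinearOrder δ]
    [TopologicalSpace δ] [OrderClosedTopology δ] {f : X → δ} {a : X}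
    (hmono : StrictMonoOn f (Ioi a)) (hcont : ContinuousOn f (Ioi a))
    (hbot : Tendsto f (𝓝[>] a) atBot) (htop : Tendsto f atTop atTop) (c : δ) :
    ∃! x, a < x ∧ f x = c := by
  obtain ⟨x, hx, rfl⟩ := hcont.surjOn_of_tendsto nonempty_Ioi
    ((tendsto_comp_coe_Ioi_atBot).2 hbot) (tendsto_comp_val_Ioi_atTop.2 htop) (mem_univ c)
  exact ⟨x, ⟨hx, rfl⟩, fun y hy => hmono.injOn hy.1 hx hy.2⟩

namespace Real

theorem arctan_lt_self_s12 {x : ℝ} (hx : 0 < x) : arctan x < x := by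
  simpa only [tan_arctan] using lt_tan (arctan_pos.2 hx) (arctan_lt_pi_div_two x)

theorem pi_div_two_sub_arctan_lt_inv {x : ℝ} (hx : 0 < x) : π / 2 - arctan x < x⁻¹ := by
  simpa only [arctan_inv_of_pos hx] using arctan_lt_self_s12 (inv_pos.2 hx)

end Real

noncomputable def shiftFun (θ μ y : ℝ) : ℝ := (1 + y ^ 2) / y * (θ * arctan y - μ * π / 2)

section shiftFun

variable {θ μ : ℝ}

theorem hasDerivAt_shiftFun {y : ℝ} (hy : y ≠ 0) :
    HasDerivAt (shiftFun θ μ)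
      (((y ^ 2 - 1) * (θ * arctan y - μ * π / 2) + θ * y) / y ^ 2) y := by
  have hprefactor : HasDerivAt (fun x : ℝ => (1 + x ^ 2) / x)
      ((↑2 * y ^ (2 - 1) * y - (1 + y ^ 2) * 1) / y ^ 2) y :=
    ((hasDerivAt_pow 2 y).const_add 1).div (hasDerivAt_id' y) hy
  have hfactor : HasDerivAt (fun x : ℝ => θ * arctan x - μ * π / 2) (θ * (1 / (1 + y ^ 2))) y :=
    ((hasDerivAt_arctan y).const_mul θ).sub_const _
  refine (hprefactor.mul hfactor).congr_deriv ?_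
  field_simp
  ring

theorem continuousOn_shiftFun : ContinuousOn (shiftFun θ μ) (Ioi 0) :=
  fun _ hy => (hasDerivAt_shiftFun (ne_of_gt hy)).continuousAt.continuousWithinAt

theorem shiftFun_deriv_numerator_pos (hθ : 0 < θ) (hμ : 0 ≤ μ) (hμθ : μ ≤ θ) {y : ℝ}
    (hy : 0 < y) : 0 < (y ^ 2 - 1) * (θ * arctan y - μ * π / 2) + θ * y := by
  rcases le_or_gt y 1 with hy1 | hy1
  · have hA : θ * arctan y - μ * π / 2 ≤ θ * y := by
      linarith [mul_lt_mul_of_pos_left (arctan_lt_self_s12 hy) hθ, mul_nonneg hμ pi_pos.le]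
    have hneg : y ^ 2 - 1 ≤ 0 := by nlinarith
    calc 0 < θ * y ^ 3 := by positivity
      _ = (y ^ 2 - 1) * (θ * y) + θ * y := by ring
      _ ≤ (y ^ 2 - 1) * (θ * arctan y - μ * π / 2) + θ * y := by
        linarith [mul_le_mul_of_nonpos_left hA hneg]
  · have hA : -(θ * y⁻¹) < θ * arctan y - μ * π / 2 := by
      linarith [mul_lt_mul_of_pos_left (pi_div_two_sub_arctan_lt_inv hy) hθ,
        mul_le_mul_of_nonneg_right hμθ pi_pos.le]
    have hpos : 0 < y ^ 2 - 1 := by nlinarith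
    calc 0 < θ * y⁻¹ := by positivity
      _ = (y ^ 2 - 1) * -(θ * y⁻¹) + θ * y := by field_simp; ring
      _ < (y ^ 2 - 1) * (θ * arctan y - μ * π / 2) + θ * y := by
        linarith [mul_lt_mul_of_pos_left hA hpos]

theorem strictMonoOn_shiftFun (hθ : 0 < θ) (hμ : 0 ≤ μ) (hμθ : μ ≤ θ) :
    StrictMonoOn (shiftFun θ μ) (Ioi 0) := by
  refine strictMonoOn_of_deriv_pos (convex_Ioi 0) continuousOn_shiftFun fun y hy => ?_
  rw [interior_Ioi] at hy
  rw [(hasDerivAt_shiftFun (ne_of_gt hy)).deriv]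
  exact div_pos (shiftFun_deriv_numerator_pos hθ hμ hμθ hy) (pow_pos hy 2)

theorem tendsto_shiftFun_nhdsGT_zero (hμ : 0 < μ) :
    Tendsto (shiftFun θ μ) (𝓝[>] 0) atBot := by
  have hprefactor : Tendsto (fun y : ℝ => (1 + y ^ 2) / y) (𝓝[>] 0) atTop := by
    have hnum : Tendsto (fun y : ℝ => 1 + y ^ 2) (𝓝[>] 0) (𝓝 1) := by
      have hcont : Continuous fun y : ℝ => 1 + y ^ 2 := by fun_prop
      exact (hcont.tendsto' 0 1 (by norm_num)).mono_left nhdsWithin_le_nhds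
    simpa only [div_eq_mul_inv] using hnum.pos_mul_atTop one_pos tendsto_inv_nhdsGT_zero
  have hfactor : Tendsto (fun y : ℝ => θ * arctan y - μ * π / 2) (𝓝[>] 0)
      (𝓝 (-(μ * π / 2))) := by
    have hcont : Continuous fun y : ℝ => θ * arctan y - μ * π / 2 := by fun_prop
    exact (hcont.tendsto' 0 _ (by simp)).mono_left nhdsWithin_le_nhds
  exact hprefactor.atTop_mul_neg (neg_neg_of_pos (by positivity)) hfactor

theorem tendsto_shiftFun_atTop (hμθ : μ < θ) : Tendsto (shiftFun θ μ) atTop atTop := by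
  have hprefactor : Tendsto (fun y : ℝ => (1 + y ^ 2) / y) atTop atTop := by
    refine tendsto_atTop_mono' atTop ?_ tendsto_id
    filter_upwards [eventually_gt_atTop 0] with y hy
    rw [id, le_div_iff₀ hy]
    nlinarith
  have hfactor : Tendsto (fun y : ℝ => θ * arctan y - μ * π / 2) atTop
      (𝓝 (θ * (π / 2) - μ * π / 2)) :=
    ((tendsto_arctan_atTop.mono_right nhdsWithin_le_nhds).const_mul θ).sub_const _
  exact hprefactor.atTop_mul_pos (by nlinarith [pi_pos]) hfactor

end shiftFun

theorem stmt_12 (c₁ c₂ c₃ : ℝ) (h₁ : 0 < c₁) (h₂ : 0 < c₂) (h₃ : 0 < c₃)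
    (F : ℝ → ℝ)
    (hF : ∀ y, F y = ((1 + y ^ 2) / y) * ((c₁ + c₂ + c₃) * arctan y - (c₂ + c₃) * π / 2)) :
    StrictMonoOn F (Ioi 0) ∧
    Tendsto F (nhdsWithin 0 (Ioi 0)) atBot ∧
    Tendsto F atTop atTop ∧
    ∀ lam : ℝ, ∃! y : ℝ, 0 < y ∧ F y = lam := by
  obtain rfl : F = shiftFun (c₁ + c₂ + c₃) (c₂ + c₃) := funext hF
  have hμ : 0 < c₂ + c₃ := by positivity
  have hμθ : c₂ + c₃ < c₁ + c₂ + c₃ := by linarith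
  have hmono := strictMonoOn_shiftFun (hμ.trans hμθ) hμ.le hμθ.le
  have hbot := tendsto_shiftFun_nhdsGT_zero (θ := c₁ + c₂ + c₃) hμ
  have htop := tendsto_shiftFun_atTop hμθ
  exact ⟨hmono, hbot, htop, hmono.existsUnique_mem_Ioi_eq continuousOn_shiftFun hbot htop⟩
end
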